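/- arXiv:1409.3688 — 5 statements merged into one kernel-verified Lean document; each statement's English description precedes it below -/
import Mathlib

section
/- Let p, q : Fin n → ℝ be probability distributions (nonnegative entries summing to 1) and let λ ∈ [0,1]. Then ∑_j √(p_j (λ p_j + (1−λ) q_j)) ≥ 1 − ((1−√λ)/2) ∑_j |p_j − q_j|. -/
theorem fidelity_mix_lower_bound {n : ℕ} (p q : Fin n → ℝ) (l : ℝ)
    (hp : ∀ j, 0 ≤ p j) (hq : ∀ j, 0 ≤ q j)
    (hp1 : ∑ j, p j = 1) (hq1 : ∑ j, q j = 1)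
    (hl0 : 0 ≤ l) (hl1 : l ≤ 1) :
    ∑ j, Real.sqrt (p j * (l * p j + (1 - l) * q j)) ≥
      1 - (1 - Real.sqrt l) / 2 * ∑ j, |p j - q j| := by
  set s := Real.sqrt l with hs
  have hs0 : 0 ≤ s := Real.sqrt_nonneg l
  have hs1 : s ≤ 1 := by
    rw [hs, show (1:ℝ) = Real.sqrt 1 by simp]
    exact Real.sqrt_le_sqrt hl1
  have hs2 : s ^ 2 = l := Real.sq_sqrt hl0
  have key : ∀ j, s * p j + (1 - s) * min (p j) (q j) ≤
      Real.sqrt (p j * (l * p j + (1 - l) * q j)) := by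
    intro j
    have ha := hp j
    have hb := hq j
    have hnn : 0 ≤ s * p j + (1 - s) * min (p j) (q j) := by
      have : 0 ≤ min (p j) (q j) := le_min ha hb
      nlinarith
    rw [← Real.sqrt_sq hnn]
    apply Real.sqrt_le_sqrt
    rcases le_total (p j) (q j) with h | h
    · rw [min_eq_left h]
      nlinarith [mul_nonneg (mul_nonneg (sub_nonneg.2 hl1) ha) (sub_nonneg.2 h)]
    · rw [min_eq_right h, ← hs2]
      nlinarith [mul_nonneg (mul_nonneg (sq_nonneg (1-s)) hb) (sub_nonneg.2 h)]
  have hsum : ∑ j, (s * p j + (1 - s) * min (p j) (q j)) ≤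
      ∑ j, Real.sqrt (p j * (l * p j + (1 - l) * q j)) :=
    Finset.sum_le_sum fun j _ => key j
  have hmin : ∀ j, min (p j) (q j) = (p j + q j - |p j - q j|) / 2 := by
    intro j
    rcases le_total (p j) (q j) with h | h
    · rw [min_eq_left h, abs_of_nonpos (by linarith)]; ring
    · rw [min_eq_right h, abs_of_nonneg (by linarith)]; ring
  have hcalc : ∑ j, (s * p j + (1 - s) * min (p j) (q j)) =
      1 - (1 - s) / 2 * ∑ j, |p j - q j| := by
    have h1 : ∑ j, (s * p j + (1 - s) * min (p j) (q j))
        = s * ∑ j, p j + (1-s)/2 * ∑ j, p j + (1-s)/2 * ∑ j, q j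
          - (1-s)/2 * ∑ j, |p j - q j| := by
      simp only [hmin, Finset.mul_sum, ← Finset.sum_add_distrib, ← Finset.sum_sub_distrib]
      apply Finset.sum_congr rfl
      intro j _
      ring
    rw [h1, hp1, hq1]
    ring
  linarith
end

section
/- Let p, q : Fin n → ℝ be probability distributions. If p_j > q_j then √(p_j(λ p_j + (1−λ) q_j)) ≥ q_j + √λ (p_j − q_j), for any λ ∈ [0,1]. -/
/-! Writing `s = √λ`, the difference of the squares of the two sides is the perfect square
`q (p - q) (1 - s)²`, which is nonnegative. -/

theorem sq_add_mul_sub_le (p q s : ℝ) (hq : 0 ≤ q) (hqp : q ≤ p) :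
    (q + s * (p - q)) ^ 2 ≤ p * (s ^ 2 * p + (1 - s ^ 2) * q) := by
  have hgap : p * (s ^ 2 * p + (1 - s ^ 2) * q) - (q + s * (p - q)) ^ 2
      = q * (p - q) * (1 - s) ^ 2 := by
    ring
  have hpq : 0 ≤ p - q := sub_nonneg.mpr hqp
  linarith [mul_nonneg (mul_nonneg hq hpq) (sq_nonneg (1 - s))]

theorem sqrt_mix_ge_of_gt_general (pj qj l : ℝ) (hq : 0 ≤ qj)
    (hgt : pj > qj) (hl0 : 0 ≤ l) :
    Real.sqrt (pj * (l * pj + (1 - l) * qj)) ≥ qj + Real.sqrt l * (pj - qj) := by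
  apply Real.le_sqrt_of_sq_le
  simpa only [Real.sq_sqrt hl0] using sq_add_mul_sub_le pj qj (Real.sqrt l) hq hgt.le

theorem sqrt_mix_ge_of_gt (pj qj l : ℝ) (hp : 0 ≤ pj) (hq : 0 ≤ qj)
    (hgt : pj > qj) (hl0 : 0 ≤ l) (hl1 : l ≤ 1) :
    Real.sqrt (pj * (l * pj + (1 - l) * qj)) ≥ qj + Real.sqrt l * (pj - qj) :=
  sqrt_mix_ge_of_gt_general pj qj l hq hgt hl0
end

section
/- Let p, q be probability distributions on Fin n and λ ∈ [0,1]. Then the classical fidelity satisfies F(p, λp + (1−λ)q) ≥ 1 − ((1−√λ)/2)‖p−q‖₁ ≥ 1 − ((1−λ)/2)‖p−q‖₁, where F(p,r) = ∑_j √(p_j r_j) and ‖p−q‖₁ = ∑_j |p_j − q_j|. -/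
theorem fidelity_mix_two_bounds {n : ℕ} (p q : Fin n → ℝ) (l : ℝ)
    (hp : ∀ j, 0 ≤ p j) (hq : ∀ j, 0 ≤ q j)
    (hp1 : ∑ j, p j = 1) (hq1 : ∑ j, q j = 1)
    (hl0 : 0 ≤ l) (hl1 : l ≤ 1) :
    (∑ j, Real.sqrt (p j * (l * p j + (1 - l) * q j)) ≥
        1 - (1 - Real.sqrt l) / 2 * ∑ j, |p j - q j|) ∧
    (1 - (1 - Real.sqrt l) / 2 * ∑ j, |p j - q j| ≥
        1 - (1 - l) / 2 * ∑ j, |p j - q j|) := by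
  set s := Real.sqrt l with hs
  have hs0 : 0 ≤ s := Real.sqrt_nonneg l
  have hs2 : s ^ 2 = l := Real.sq_sqrt hl0
  have hs1 : s ≤ 1 := by nlinarith
  have hSnn : 0 ≤ ∑ j, |p j - q j| := Finset.sum_nonneg fun j _ => abs_nonneg _
  constructor
  · have key : ∀ j : Fin n, s * p j + (1 - s) * min (p j) (q j) ≤
        Real.sqrt (p j * (l * p j + (1 - l) * q j)) := by
      intro j
      have hpj := hp j
      have hqj := hq j
      have hm1 : min (p j) (q j) ≤ p j := min_le_left _ _
      have hm2 : min (p j) (q j) ≤ q j := min_le_right _ _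
      have hm0 : 0 ≤ min (p j) (q j) := le_min hpj hqj
      rw [show l = s ^ 2 by rw [hs2]]
      apply (Real.le_sqrt
        (by nlinarith [mul_nonneg hs0 hpj, mul_nonneg (sub_nonneg.2 hs1) hm0])
        (by nlinarith [mul_nonneg hpj hqj, mul_nonneg (mul_nonneg hs0 hs0) (mul_nonneg hpj hpj),
          mul_nonneg (mul_nonneg hs0 hs0) (mul_nonneg hpj hqj)])).mpr
      nlinarith [mul_nonneg (mul_nonneg (sub_nonneg.2 hs1) hpj) (sub_nonneg.2 hm2),
        mul_nonneg (mul_nonneg (mul_nonneg hs0 (sub_nonneg.2 hs1)) hpj) (sub_nonneg.2 hm2),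
        mul_nonneg (mul_nonneg (mul_nonneg (sub_nonneg.2 hs1) (sub_nonneg.2 hs1)) hm0)
          (sub_nonneg.2 hm1),
        mul_nonneg (mul_nonneg (mul_nonneg (sub_nonneg.2 hs1) (sub_nonneg.2 hs1)) hpj)
          (sub_nonneg.2 hm2)]
    have hsum : ∑ j, (s * p j + (1 - s) * min (p j) (q j)) ≤
        ∑ j, Real.sqrt (p j * (l * p j + (1 - l) * q j)) :=
      Finset.sum_le_sum fun j _ => key j
    have hmin : ∑ j, min (p j) (q j) = 1 - (∑ j, |p j - q j|) / 2 := by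
      have : ∀ j : Fin n, min (p j) (q j) = (p j + q j) / 2 - |p j - q j| / 2 := by
        intro j
        rcases le_total (p j) (q j) with h | h
        · rw [min_eq_left h, abs_of_nonpos (by linarith)]; ring
        · rw [min_eq_right h, abs_of_nonneg (by linarith)]; ring
      rw [Finset.sum_congr rfl fun j _ => this j, Finset.sum_sub_distrib]
      rw [← Finset.sum_div, ← Finset.sum_div, Finset.sum_add_distrib, hp1, hq1]
      ring
    calc 1 - (1 - s) / 2 * ∑ j, |p j - q j|
        = ∑ j, (s * p j + (1 - s) * min (p j) (q j)) := by
          rw [Finset.sum_add_distrib, ← Finset.mul_sum, ← Finset.mul_sum, hp1, hmin]; ring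
      _ ≤ _ := hsum
  · nlinarith [mul_nonneg (mul_nonneg hs0 (sub_nonneg.2 hs1)) hSnn]
end

section
/- Let p, q be probability distributions on Fin n with the property that there exists λ₀ > 1 such that p_j ≤ λ₀ q_j for all j. Then F(p,q) ≥ 1 − (1/2)·(√λ₀/(√λ₀+1))·‖p−q‖₁, where F(p,q) = ∑_j √(p_j q_j) and ‖p−q‖₁ = ∑_j |p_j − q_j|. -/
/-!
Write `u = √p_j`, `v = √q_j` and `s = √λ₀`, so that domination reads `u ≤ s v`. Then pointwise
`(s + 1) (u - v)² ≤ s |u² - v²| - (u² - v²)`, the difference of the two sides being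
`2 (s + 1) u (v - u)` when `u ≤ v` and `2 (u - v) (s v - u)` when `u ≥ v`. Summing over `j`, the
signed terms cancel because `p` and `q` have the same mass, and the left side becomes
`(s + 1) (2 - 2 F(p, q))`.
-/

open Finset Real

lemma sq_sub_le_of_le_mul {u v s : ℝ} (hu : 0 ≤ u) (hv : 0 ≤ v) (hs : 0 ≤ s)
    (huv : u ≤ s * v) :
    (s + 1) * (u - v) ^ 2 ≤ s * |u ^ 2 - v ^ 2| - (u ^ 2 - v ^ 2) := by
  rcases le_total u v with h | h
  · rw [abs_of_nonpos (by nlinarith)]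
    nlinarith [mul_nonneg (by linarith : 0 ≤ s + 1) (mul_nonneg (sub_nonneg.2 h) hu)]
  · rw [abs_of_nonneg (by nlinarith)]
    nlinarith [mul_nonneg (sub_nonneg.2 h) (sub_nonneg.2 huv)]

lemma sq_sub_sqrt_le_of_le_mul {a b l : ℝ} (ha : 0 ≤ a) (hb : 0 ≤ b) (hab : a ≤ l * b) :
    (√l + 1) * (√a - √b) ^ 2 ≤ √l * |a - b| - (a - b) := by
  have hdom : √a ≤ √l * √b := (sqrt_mul' l hb).symm ▸ sqrt_le_sqrt hab
  simpa only [sq_sqrt ha, sq_sqrt hb] using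
    sq_sub_le_of_le_mul (sqrt_nonneg a) (sqrt_nonneg b) (sqrt_nonneg l) hdom

lemma sum_sq_sub_sqrt {ι : Type*} [Fintype ι] {p q : ι → ℝ} (hp : ∀ j, 0 ≤ p j)
    (hq : ∀ j, 0 ≤ q j) :
    ∑ j, (√(p j) - √(q j)) ^ 2 = ∑ j, p j + ∑ j, q j - 2 * ∑ j, √(p j * q j) := by
  rw [mul_sum, ← sum_add_distrib, ← sum_sub_distrib]
  refine sum_congr rfl fun j _ => ?_
  rw [sub_sq, sq_sqrt (hp j), sq_sqrt (hq j), sqrt_mul (hp j)]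
  ring

lemma sum_sq_sub_sqrt_le_of_le_mul {ι : Type*} [Fintype ι] {p q : ι → ℝ} {l : ℝ}
    (hp : ∀ j, 0 ≤ p j) (hq : ∀ j, 0 ≤ q j) (hpq : ∑ j, p j = ∑ j, q j)
    (hdom : ∀ j, p j ≤ l * q j) :
    (√l + 1) * ∑ j, (√(p j) - √(q j)) ^ 2 ≤ √l * ∑ j, |p j - q j| := by
  calc (√l + 1) * ∑ j, (√(p j) - √(q j)) ^ 2
      ≤ ∑ j, (√l * |p j - q j| - (p j - q j)) := by
        rw [mul_sum]
        exact sum_le_sum fun j _ => sq_sub_sqrt_le_of_le_mul (hp j) (hq j) (hdom j)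
    _ = √l * ∑ j, |p j - q j| := by
        rw [sum_sub_distrib, sum_sub_distrib, hpq, ← mul_sum]
        ring

theorem fidelity_lower_bound_max_rel_general {n : ℕ} (p q : Fin n → ℝ) (l0 : ℝ)
    (hp : ∀ j, 0 ≤ p j) (hq : ∀ j, 0 ≤ q j)
    (hp1 : ∑ j, p j = 1) (hq1 : ∑ j, q j = 1)
    (hdom : ∀ j, p j ≤ l0 * q j) :
    ∑ j, Real.sqrt (p j * q j) ≥
      1 - (1 / 2) * (Real.sqrt l0 / (Real.sqrt l0 + 1)) * ∑ j, |p j - q j| := by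
  have hbound := sum_sq_sub_sqrt_le_of_le_mul hp hq (hp1.trans hq1.symm) hdom
  rw [sum_sq_sub_sqrt hp hq, hp1, hq1] at hbound
  have hs : 0 < √l0 + 1 := by positivity
  have hrhs : 1 / 2 * (√l0 / (√l0 + 1)) * ∑ j, |p j - q j|
      = (√l0 * ∑ j, |p j - q j|) / (2 * (√l0 + 1)) := by
    field_simp
  rw [hrhs, ge_iff_le, sub_le_comm, le_div_iff₀ (mul_pos two_pos hs)]
  linarith

theorem fidelity_lower_bound_max_rel {n : ℕ} (p q : Fin n → ℝ) (l0 : ℝ)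
    (hp : ∀ j, 0 ≤ p j) (hq : ∀ j, 0 ≤ q j)
    (hp1 : ∑ j, p j = 1) (hq1 : ∑ j, q j = 1)
    (hl0 : 1 < l0) (hdom : ∀ j, p j ≤ l0 * q j) :
    ∑ j, Real.sqrt (p j * q j) ≥
      1 - (1 / 2) * (Real.sqrt l0 / (Real.sqrt l0 + 1)) * ∑ j, |p j - q j| :=
  fidelity_lower_bound_max_rel_general p q l0 hp hq hp1 hq1 hdom
end

section
/- Let ρ and σ be commuting d×d positive semidefinite matrices of trace 1 such that ρ ≤ λ₀σ (in the Loewner order) for some real λ₀ > 1. Then the fidelity satisfies F(ρ,σ) = tr√(√ρ σ √ρ) ≥ 1 − (1/2)·(√λ₀/(√λ₀+1))·‖ρ−σ‖₁. -/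
namespace Matrix.PosSemidef

open scoped ComplexOrder

variable {n 𝕜 : Type*} [Fintype n] [DecidableEq n] [RCLike 𝕜]

/-- The positive semidefinite square root of a positive semidefinite matrix -/
noncomputable def sqrt {A : Matrix n n 𝕜} (hA : A.PosSemidef) : Matrix n n 𝕜 :=
  hA.1.eigenvectorUnitary.1 * Matrix.diagonal ((↑) ∘ (√·) ∘ hA.1.eigenvalues) *
  (star hA.1.eigenvectorUnitary : Matrix n n 𝕜)

lemma posSemidef_sqrt {A : Matrix n n 𝕜} (hA : A.PosSemidef) : PosSemidef hA.sqrt := by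
  have hd : (Matrix.diagonal ((↑) ∘ (√·) ∘ hA.1.eigenvalues : n → 𝕜)).PosSemidef := by
    refine Matrix.posSemidef_diagonal_iff.mpr fun i => ?_
    rw [Function.comp_apply, RCLike.nonneg_iff]
    constructor
    · simp only [Function.comp_apply, RCLike.ofReal_re]
      exact Real.sqrt_nonneg _
    · simp only [Function.comp_apply, RCLike.ofReal_im]
  have h := hd.mul_mul_conjTranspose_same (hA.1.eigenvectorUnitary.1 : Matrix n n 𝕜)
  simpa [sqrt, Matrix.star_eq_conjTranspose] using h

end Matrix.PosSemidef

/-!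
Commuting Hermitian matrices are diagonal in a common orthonormal basis: `ρ = U diag(p) U*` and
`σ = U diag(q) U*`. Then `√ρ σ √ρ = U diag(p q) U*`, so the fidelity is `∑ √(pᵢ qᵢ)`, the trace
norm is `∑ |pᵢ - qᵢ|`, and `ρ ≤ λ₀ σ` says `pᵢ ≤ λ₀ qᵢ`. With `s = √λ₀`, each term satisfies
`√(pᵢ qᵢ) ≥ min pᵢ qᵢ + (pᵢ - qᵢ)⁺ / (s + 1)`; summing, and writing
`T = ∑ (pᵢ - qᵢ)⁺ = ‖p - q‖₁ / 2`, the fidelity is at least `1 - T + T / (s + 1) = 1 - T s / (s + 1)`.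
-/

open Matrix Unitary Module.End
open scoped ComplexOrder

lemma Real.min_add_posPart_sub_div_le_sqrt_mul {p q s : ℝ} (hp : 0 ≤ p) (hq : 0 ≤ q)
    (hs : 0 ≤ s) (h : √p ≤ s * √q) : min p q + (p - q)⁺ / (s + 1) ≤ √(p * q) := by
  rcases le_total p q with hpq | hqp
  · rw [min_eq_left hpq, posPart_eq_zero.mpr (sub_nonpos.mpr hpq), zero_div, add_zero]
    calc p = √(p * p) := (Real.sqrt_mul_self hp).symm
      _ ≤ √(p * q) := Real.sqrt_le_sqrt (mul_le_mul_of_nonneg_left hpq hp)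
  · rw [min_eq_right hqp, posPart_eq_self.mpr (sub_nonneg.mpr hqp), Real.sqrt_mul hp]
    have hsqrt : √q ≤ √p := Real.sqrt_le_sqrt hqp
    -- `p - q = (√p - √q) (√p + √q)` and `√p + √q ≤ (s + 1) √q`
    have key : p - q ≤ (s + 1) * (√p * √q - q) := by
      nlinarith [Real.sq_sqrt hp, Real.sq_sqrt hq,
        mul_nonneg (sub_nonneg.mpr hsqrt) (sub_nonneg.mpr h)]
    have := (div_le_iff₀' (by linarith : (0 : ℝ) < s + 1)).mpr key
    linarith

lemma one_sub_mul_sum_abs_sub_le_sum_sqrt_mul {ι : Type*} [Fintype ι] {p q : ι → ℝ} {l : ℝ}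
    (hp : ∀ i, 0 ≤ p i) (hq : ∀ i, 0 ≤ q i) (hp1 : ∑ i, p i = 1) (hq1 : ∑ i, q i = 1)
    (hpq : ∀ i, p i ≤ l * q i) :
    1 - 1 / 2 * (√l / (√l + 1)) * ∑ i, |p i - q i| ≤ ∑ i, √(p i * q i) := by
  have hpt i : min (p i) (q i) + (p i - q i)⁺ / (√l + 1) ≤ √(p i * q i) := by
    refine Real.min_add_posPart_sub_div_le_sqrt_mul (hp i) (hq i) (Real.sqrt_nonneg _) ?_
    rw [← Real.sqrt_mul' _ (hq i)]
    exact Real.sqrt_le_sqrt (hpq i)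
  have hid i : min (p i) (q i) = p i - (p i - q i)⁺ ∧
      |p i - q i| = 2 * (p i - q i)⁺ - (p i - q i) := by
    rcases le_total (p i) (q i) with h | h
    · simp [h, abs_of_nonpos (sub_nonpos.mpr h)]
    · simp [h, abs_of_nonneg (sub_nonneg.mpr h)]
      ring
  set T := ∑ i, (p i - q i)⁺
  have hmin : ∑ i, min (p i) (q i) = 1 - T := by
    simp only [fun i ↦ (hid i).1, Finset.sum_sub_distrib, hp1, T]
  have habs : ∑ i, |p i - q i| = 2 * T := by
    simp only [fun i ↦ (hid i).2, Finset.sum_sub_distrib, ← Finset.mul_sum, hp1, hq1, T]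
    ring
  calc 1 - 1 / 2 * (√l / (√l + 1)) * ∑ i, |p i - q i|
      = ∑ i, min (p i) (q i) + T / (√l + 1) := by
        rw [habs, hmin]
        field_simp
        ring
    _ = ∑ i, (min (p i) (q i) + (p i - q i)⁺ / (√l + 1)) := by
        rw [Finset.sum_add_distrib, Finset.sum_div]
    _ ≤ ∑ i, √(p i * q i) := Finset.sum_le_sum fun i _ ↦ hpt i

lemma LinearMap.IsSymmetric.apply_eq_re_smul_of_mem_eigenspace {E 𝕜 : Type*} [RCLike 𝕜]
    [NormedAddCommGroup E] [InnerProductSpace 𝕜 E] {T : E →ₗ[𝕜] E} (hT : T.IsSymmetric)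
    {μ : 𝕜} {v : E} (hv : v ∈ eigenspace T μ) : T v = (RCLike.re μ : 𝕜) • v := by
  rcases eq_or_ne v 0 with rfl | hv0
  · simp
  have hμ : HasEigenvalue T μ := hasEigenvalue_of_hasEigenvector ⟨hv, hv0⟩
  rw [RCLike.conj_eq_iff_re.mp (hT.conj_eigenvalue_eq_self hμ)]
  exact mem_eigenspace_iff.mp hv

namespace Matrix

variable {n 𝕜 : Type*} [Fintype n] [DecidableEq n] [RCLike 𝕜]

open scoped MatrixOrder in
lemma PosSemidef.sqrt_eq_of_mul_self_eq {A B : Matrix n n 𝕜} (hA : A.PosSemidef)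
    (hB : B.PosSemidef) (hBA : B * B = A) : hA.sqrt = B := by
  have hcfc : hA.sqrt = CFC.sqrt A := by
    rw [CFC.sqrt_eq_real_sqrt A hA.nonneg, cfcₙ_eq_cfc, hA.1.cfc_eq]
    rfl
  rw [hcfc]
  exact CFC.sqrt_unique hBA hB.nonneg

noncomputable def unitaryDiagonal (U : unitaryGroup n 𝕜) (v : n → ℝ) : Matrix n n 𝕜 :=
  conjStarAlgAut 𝕜 _ U (diagonal fun i ↦ (v i : 𝕜))

section unitaryDiagonal

variable (U : unitaryGroup n 𝕜) (v w : n → ℝ)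

lemma unitaryDiagonal_mul :
    unitaryDiagonal U v * unitaryDiagonal U w = unitaryDiagonal U (v * w) := by
  rw [unitaryDiagonal, unitaryDiagonal, unitaryDiagonal, ← map_mul, diagonal_mul_diagonal]
  simp

lemma unitaryDiagonal_sub :
    unitaryDiagonal U v - unitaryDiagonal U w = unitaryDiagonal U (v - w) := by
  rw [unitaryDiagonal, unitaryDiagonal, unitaryDiagonal, ← map_sub, diagonal_sub]
  simp

lemma smul_unitaryDiagonal (c : ℝ) : c • unitaryDiagonal U v = unitaryDiagonal U (c • v) := by
  rw [RCLike.real_smul_eq_coe_smul (K := 𝕜), unitaryDiagonal, unitaryDiagonal, ← map_smul,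
    ← diagonal_smul]
  congr 2
  ext i
  simp

lemma trace_unitaryDiagonal : (unitaryDiagonal U v).trace = ((∑ i, v i : ℝ) : 𝕜) := by
  rw [unitaryDiagonal, conjStarAlgAut_apply, trace_mul_cycle, coe_star_mul_self, one_mul,
    trace_diagonal, RCLike.ofReal_sum]

lemma posSemidef_unitaryDiagonal_iff : (unitaryDiagonal U v).PosSemidef ↔ 0 ≤ v := by
  simp [unitaryDiagonal, isUnit_coe.posSemidef_star_right_conjugate_iff,
    posSemidef_diagonal_iff, Pi.le_def]

lemma PosSemidef.sqrt_eq_unitaryDiagonal {A : Matrix n n 𝕜} (hA : A.PosSemidef)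
    (hAv : A = unitaryDiagonal U v) (hv : 0 ≤ v) :
    hA.sqrt = unitaryDiagonal U fun i ↦ √(v i) := by
  refine hA.sqrt_eq_of_mul_self_eq
    ((posSemidef_unitaryDiagonal_iff U _).mpr fun i ↦ Real.sqrt_nonneg _) ?_
  rw [unitaryDiagonal_mul, hAv]
  congr 1
  ext i
  exact Real.mul_self_sqrt (hv i)

end unitaryDiagonal

lemma eq_unitaryDiagonal_of_mulVec_eq_smul {A : Matrix n n 𝕜}
    (b : OrthonormalBasis n 𝕜 (EuclideanSpace 𝕜 n)) (a : n → ℝ)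
    (h : ∀ i, A *ᵥ b i = (a i : 𝕜) • b i) :
    A = unitaryDiagonal ⟨_, (EuclideanSpace.basisFun n 𝕜).toMatrix_orthonormalBasis_mem_unitary b⟩
      a := by
  set U : unitaryGroup n 𝕜 :=
    ⟨_, (EuclideanSpace.basisFun n 𝕜).toMatrix_orthonormalBasis_mem_unitary b⟩
  have hAU : A * U = U * diagonal fun i ↦ (a i : 𝕜) := by
    have hU k i : (U : Matrix n n 𝕜) k i = b i k := rfl
    ext k i
    rw [mul_diagonal, hU, mul_apply]
    simpa [mulVec, dotProduct, hU, mul_comm] using congr_fun (h i) k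
  rw [unitaryDiagonal, conjStarAlgAut_apply, ← hAU, mul_assoc, Unitary.mul_star_self_of_mem U.2,
    mul_one]

lemma IsHermitian.exists_orthonormalBasis_mulVec_eq_smul_of_commute {A B : Matrix n n 𝕜}
    (hA : A.IsHermitian) (hB : B.IsHermitian) (hAB : Commute A B) :
    ∃ (b : OrthonormalBasis n 𝕜 (EuclideanSpace 𝕜 n)) (a c : n → ℝ),
      ∀ i, A *ᵥ b i = (a i : 𝕜) • b i ∧ B *ᵥ b i = (c i : 𝕜) • b i := by
  classical
  have hTA := isSymmetric_toEuclideanLin_iff.mpr hA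
  have hTB := isSymmetric_toEuclideanLin_iff.mpr hB
  let V (μ : 𝕜 × 𝕜) := eigenspace (toEuclideanLin A) μ.2 ⊓ eigenspace (toEuclideanLin B) μ.1
  have hV₀ : DirectSum.IsInternal V :=
    hTA.directSum_isInternal_of_commute hTB (hAB.map (toLpLinAlgEquiv 2))
  -- only finitely many joint eigenspaces are nonzero, and the subordinate basis needs that
  have := hV₀.submodule_iSupIndep.fintypeNeBotOfFiniteDimensional
  have hV := DirectSum.isInternal_ne_bot_iff.mpr hV₀
  have hVorth := (hTA.orthogonalFamily_eigenspace_inf_eigenspace hTB).comp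
    (Subtype.val_injective (p := fun μ ↦ V μ ≠ ⊥))
  have hn : Module.finrank 𝕜 (EuclideanSpace 𝕜 n) = Fintype.card n := finrank_euclideanSpace
  let μ k := (hV.subordinateOrthonormalBasisIndex hn k hVorth).1
  have hmem k := hV.subordinateOrthonormalBasis_subordinate hn k hVorth
  let e := Fintype.equivFin n
  refine ⟨(hV.subordinateOrthonormalBasis hn hVorth).reindex e.symm,
    fun i ↦ RCLike.re (μ (e i)).2, fun i ↦ RCLike.re (μ (e i)).1, fun i ↦ ?_⟩
  simp only [OrthonormalBasis.reindex_apply, Equiv.symm_symm]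
  exact ⟨congr(WithLp.ofLp $(hTA.apply_eq_re_smul_of_mem_eigenspace (hmem (e i)).1)),
    congr(WithLp.ofLp $(hTB.apply_eq_re_smul_of_mem_eigenspace (hmem (e i)).2))⟩

theorem IsHermitian.exists_unitaryDiagonal_of_commute {A B : Matrix n n 𝕜} (hA : A.IsHermitian)
    (hB : B.IsHermitian) (hAB : Commute A B) :
    ∃ (U : unitaryGroup n 𝕜) (a c : n → ℝ), A = unitaryDiagonal U a ∧ B = unitaryDiagonal U c := by
  obtain ⟨b, a, c, h⟩ := hA.exists_orthonormalBasis_mulVec_eq_smul_of_commute hB hAB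
  exact ⟨_, a, c, eq_unitaryDiagonal_of_mulVec_eq_smul b a fun i ↦ (h i).1,
    eq_unitaryDiagonal_of_mulVec_eq_smul b c fun i ↦ (h i).2⟩

end Matrix

open Matrix in
open scoped ComplexOrder in
theorem quantum_fidelity_lower_bound_max_rel_commuting {d : ℕ}
    (ρ σ : Matrix (Fin d) (Fin d) ℂ) (hρ : ρ.PosSemidef) (hσ : σ.PosSemidef)
    (hρ1 : ρ.trace = 1) (hσ1 : σ.trace = 1) (hcomm : ρ * σ = σ * ρ)
    (l0 : ℝ) (hdom : ((l0 : ℂ) • σ - ρ).PosSemidef) :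
    (Matrix.PosSemidef.sqrt
        (show (hρ.sqrt * σ * hρ.sqrt).PosSemidef by
          have h := hσ.mul_mul_conjTranspose_same hρ.sqrt
          rwa [hρ.posSemidef_sqrt.isHermitian.eq] at h)).trace.re ≥
      1 - (1 / 2) * (Real.sqrt l0 / (Real.sqrt l0 + 1)) *
        (Matrix.PosSemidef.sqrt
          (show ((ρ - σ) * (ρ - σ)).PosSemidef by
            have h := Matrix.posSemidef_conjTranspose_mul_self (ρ - σ)
            rwa [Matrix.IsHermitian.eq (hρ.isHermitian.sub hσ.isHermitian)] at h)).trace.re := by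
  obtain ⟨U, p, q, rfl, rfl⟩ := hρ.1.exists_unitaryDiagonal_of_commute hσ.1 hcomm
  have hp := (posSemidef_unitaryDiagonal_iff U p).mp hρ
  have hq := (posSemidef_unitaryDiagonal_iff U q).mp hσ
  have hpq : 0 ≤ l0 • q - p := by
    rwa [Complex.coe_smul, smul_unitaryDiagonal, unitaryDiagonal_sub,
      posSemidef_unitaryDiagonal_iff] at hdom
  have hsum (v : Fin d → ℝ) (h : (unitaryDiagonal U v).trace = 1) : ∑ i, v i = 1 := by
    rwa [trace_unitaryDiagonal, ← RCLike.ofReal_one, RCLike.ofReal_inj] at h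
  have hfid : hρ.sqrt * unitaryDiagonal U q * hρ.sqrt = unitaryDiagonal U (p * q) := by
    rw [hρ.sqrt_eq_unitaryDiagonal U p rfl hp, unitaryDiagonal_mul, unitaryDiagonal_mul]
    congr 1
    ext i
    simp only [Pi.mul_apply]
    linear_combination q i * Real.mul_self_sqrt (hp i)
  have hdiff : (unitaryDiagonal U p - unitaryDiagonal U q) *
      (unitaryDiagonal U p - unitaryDiagonal U q) = unitaryDiagonal U ((p - q) * (p - q)) := by
    rw [unitaryDiagonal_sub, unitaryDiagonal_mul]
  rw [ge_iff_le, PosSemidef.sqrt_eq_unitaryDiagonal U _ _ hfid (mul_nonneg hp hq),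
    PosSemidef.sqrt_eq_unitaryDiagonal U _ _ hdiff fun i ↦ mul_self_nonneg _,
    trace_unitaryDiagonal, trace_unitaryDiagonal]
  simp only [Pi.mul_apply, Pi.sub_apply, Real.sqrt_mul_self_eq_abs, ← RCLike.re_to_complex,
    RCLike.ofReal_re]
  exact one_sub_mul_sum_abs_sub_le_sum_sqrt_mul hp hq (hsum p hρ1) (hsum q hσ1)
    fun i ↦ by simpa using hpq i
end
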